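/- Consider the gradient-push algorithm where each f_i has L-Lipschitz gradient. Then for every w_* ∈ ℝ^d and every t ≥ 0, ‖∇F(z(t))‖_{π⊗1_d} ≤ Lδ ‖w(t) − nπ⊗w̄(t)‖_{π⊗1_d} + L(δ‖1_n − nπ‖_π σ_W^t + (Σ_{j=1}^n 1/π_j)^{1/2}) ‖w̄(t) − w_*‖ + ‖∇F(1_n⊗w_*)‖_{π⊗1_d} + Lδ ‖1_n − nπ‖_π σ_W^t ‖w_*‖. -/

import Mathlib

open Finset

/-- π-weighted norm on ℝ^n: ‖x‖_π = (Σ_j x_j²/π_j)^{1/2}. -/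
noncomputable def wnorm {n : ℕ} (p : Fin n → ℝ) (x : Fin n → ℝ) : ℝ :=
  Real.sqrt (∑ j, x j ^ 2 / p j)

/-- Matrix operator norm induced by the π-weighted norm. -/
noncomputable def matNorm {n : ℕ} (p : Fin n → ℝ) (A : Matrix (Fin n) (Fin n) ℝ) : ℝ :=
  ⨆ x : {x : Fin n → ℝ // x ≠ 0}, wnorm p (A.mulVec x.1) / wnorm p x.1

/-- Block weighted norm on (ℝ^d)^n: ‖x‖_{π⊗1_d} = (Σ_j ‖x_j‖²/π_j)^{1/2}. -/
noncomputable def bnorm {n d : ℕ} (p : Fin n → ℝ)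
    (x : Fin n → EuclideanSpace ℝ (Fin d)) : ℝ :=
  Real.sqrt (∑ j, ‖x j‖ ^ 2 / p j)

/-- Blockwise action of the Kronecker product A ⊗ I_d on (ℝ^d)^n. -/
noncomputable def kron {n d : ℕ} (A : Matrix (Fin n) (Fin n) ℝ)
    (x : Fin n → EuclideanSpace ℝ (Fin d)) : Fin n → EuclideanSpace ℝ (Fin d) :=
  fun i => ∑ j, A i j • x j

/-- Operator norm of A ⊗ I_d induced by ‖·‖_{π⊗1_d}. -/
noncomputable def bopNorm {n : ℕ} (d : ℕ) (p : Fin n → ℝ)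
    (A : Matrix (Fin n) (Fin n) ℝ) : ℝ :=
  ⨆ x : {x : Fin n → EuclideanSpace ℝ (Fin d) // x ≠ 0},
    bnorm p (kron A x.1) / bnorm p x.1

/-- Euclidean norm on (ℝ^d)^n. -/
noncomputable def enormB {n d : ℕ} (x : Fin n → EuclideanSpace ℝ (Fin d)) : ℝ :=
  Real.sqrt (∑ j, ‖x j‖ ^ 2)


lemma bnorm_nonneg {n d : ℕ} (p : Fin n → ℝ) (x : Fin n → EuclideanSpace ℝ (Fin d)) :
    0 ≤ bnorm p x := Real.sqrt_nonneg _

lemma wnorm_nonneg {n : ℕ} (p : Fin n → ℝ) (x : Fin n → ℝ) :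
    0 ≤ wnorm p x := Real.sqrt_nonneg _

/-- scaled monotonicity for bnorm -/
lemma bnorm_le_of {n d : ℕ} {p : Fin n → ℝ} (hp : ∀ i, 0 < p i)
    {x y : Fin n → EuclideanSpace ℝ (Fin d)} {c : ℝ} (hc : 0 ≤ c)
    (h : ∀ j, ‖x j‖ ≤ c * ‖y j‖) : bnorm p x ≤ c * bnorm p y := by
  unfold bnorm
  rw [← Real.sqrt_sq hc, ← Real.sqrt_mul (sq_nonneg c), Finset.mul_sum]
  apply Real.sqrt_le_sqrt
  apply Finset.sum_le_sum
  intro j _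
  rw [← mul_div_assoc]
  apply div_le_div_of_nonneg_right _ (hp j).le
  calc ‖x j‖ ^ 2 ≤ (c * ‖y j‖) ^ 2 := by
        apply pow_le_pow_left₀ (norm_nonneg _) (h j)
    _ = c ^ 2 * ‖y j‖ ^ 2 := by ring

lemma wnorm_le_of {n : ℕ} {p : Fin n → ℝ} (hp : ∀ i, 0 < p i)
    {x y : Fin n → ℝ} {c : ℝ} (hc : 0 ≤ c)
    (h : ∀ j, |x j| ≤ c * |y j|) : wnorm p x ≤ c * wnorm p y := by
  unfold wnorm
  rw [← Real.sqrt_sq hc, ← Real.sqrt_mul (sq_nonneg c), Finset.mul_sum]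
  apply Real.sqrt_le_sqrt
  apply Finset.sum_le_sum
  intro j _
  rw [← mul_div_assoc]
  apply div_le_div_of_nonneg_right _ (hp j).le
  calc x j ^ 2 = |x j| ^ 2 := (sq_abs _).symm
    _ ≤ (c * |y j|) ^ 2 := by apply pow_le_pow_left₀ (abs_nonneg _) (h j)
    _ = c ^ 2 * y j ^ 2 := by rw [mul_pow, sq_abs]

lemma bnorm_add_le {n d : ℕ} (p : Fin n → ℝ) (hp : ∀ i, 0 < p i)
    (x y : Fin n → EuclideanSpace ℝ (Fin d)) :
    bnorm p (fun i => x i + y i) ≤ bnorm p x + bnorm p y := by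
  set T : (Fin n → EuclideanSpace ℝ (Fin d)) →
      PiLp 2 (fun _ : Fin n => EuclideanSpace ℝ (Fin d)) :=
    fun x => WithLp.toLp 2 (fun j => (Real.sqrt (p j))⁻¹ • x j) with hT
  have key : ∀ u : Fin n → EuclideanSpace ℝ (Fin d), bnorm p u = ‖T u‖ := by
    intro u
    rw [PiLp.norm_eq_of_L2]
    unfold bnorm
    congr 1
    apply Finset.sum_congr rfl
    intro j _
    show ‖u j‖ ^ 2 / p j = ‖(Real.sqrt (p j))⁻¹ • u j‖ ^ 2
    rw [norm_smul, norm_inv, Real.norm_eq_abs, abs_of_nonneg (Real.sqrt_nonneg _),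
      mul_pow, inv_pow, Real.sq_sqrt (hp j).le, div_eq_inv_mul]
  have hadd : T (fun i => x i + y i) = T x + T y := by
    refine PiLp.ext fun j => ?_
    show (Real.sqrt (p j))⁻¹ • (x j + y j) = (T x + T y) j
    rw [PiLp.add_apply]
    show _ = (Real.sqrt (p j))⁻¹ • x j + (Real.sqrt (p j))⁻¹ • y j
    rw [smul_add]
  rw [key, key, key, hadd]
  exact norm_add_le _ _

lemma bnorm_smul_const {n d : ℕ} (p : Fin n → ℝ) (hp : ∀ i, 0 < p i)
    (c : Fin n → ℝ) (v : EuclideanSpace ℝ (Fin d)) :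
    bnorm p (fun i => c i • v) = wnorm p c * ‖v‖ := by
  unfold bnorm wnorm
  rw [← Real.sqrt_sq (norm_nonneg v), ← Real.sqrt_mul]
  · congr 1
    rw [Finset.sum_mul]
    apply Finset.sum_congr rfl
    intro j _
    rw [norm_smul, Real.norm_eq_abs, mul_pow, sq_abs, div_mul_eq_mul_div]
  · apply Finset.sum_nonneg
    intro j _
    have := hp j
    positivity

lemma wnorm_zero {n : ℕ} (p : Fin n → ℝ) : wnorm p (fun _ => (0:ℝ)) = 0 := by
  unfold wnorm; simp

lemma wnorm_pos {n : ℕ} {p : Fin n → ℝ} (hp : ∀ i, 0 < p i) {x : Fin n → ℝ}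
    (hx : x ≠ 0) : 0 < wnorm p x := by
  apply Real.sqrt_pos.2
  obtain ⟨j, hj⟩ := Function.ne_iff.1 hx
  apply Finset.sum_pos' (fun i _ => div_nonneg (sq_nonneg _) (hp i).le)
  refine ⟨j, Finset.mem_univ j, ?_⟩
  have hx2 : 0 < x j ^ 2 := lt_of_le_of_ne (sq_nonneg _) (Ne.symm (pow_ne_zero 2 hj))
  exact div_pos hx2 (hp j)

lemma wnorm_mulVec_le_frob {n : ℕ} {p : Fin n → ℝ} (hp : ∀ i, 0 < p i)
    (A : Matrix (Fin n) (Fin n) ℝ) (x : Fin n → ℝ) :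
    wnorm p (A.mulVec x) ≤
      Real.sqrt (∑ i, ∑ j, (A i j) ^ 2 * p j / p i) * wnorm p x := by
  unfold wnorm
  rw [← Real.sqrt_mul (by
    apply Finset.sum_nonneg; intro i _; apply Finset.sum_nonneg; intro j _
    have := hp i; have := hp j; positivity)]
  apply Real.sqrt_le_sqrt
  have key : ∀ i, (A.mulVec x i) ^ 2 ≤ (∑ j, (A i j) ^ 2 * p j) * (∑ j, x j ^ 2 / p j) := by
    intro i
    have h := Finset.sum_mul_sq_le_sq_mul_sq Finset.univ
      (fun j => A i j * Real.sqrt (p j)) (fun j => x j / Real.sqrt (p j))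
    have e1 : ∀ j ∈ Finset.univ, (A i j * Real.sqrt (p j)) * (x j / Real.sqrt (p j))
        = A i j * x j := by
      intro j _
      have hs : Real.sqrt (p j) ≠ 0 := ne_of_gt (Real.sqrt_pos.2 (hp j))
      field_simp
    have e2 : ∀ j ∈ Finset.univ, (A i j * Real.sqrt (p j)) ^ 2 = A i j ^ 2 * p j := by
      intro j _; rw [mul_pow, Real.sq_sqrt (hp j).le]
    have e3 : ∀ j ∈ Finset.univ, (x j / Real.sqrt (p j)) ^ 2 = x j ^ 2 / p j := by
      intro j _; rw [div_pow, Real.sq_sqrt (hp j).le]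
    rw [Finset.sum_congr rfl e1, Finset.sum_congr rfl e2, Finset.sum_congr rfl e3] at h
    simpa [Matrix.mulVec, dotProduct] using h
  calc ∑ i, (A.mulVec x i) ^ 2 / p i
      ≤ ∑ i, ((∑ j, (A i j) ^ 2 * p j) * (∑ j, x j ^ 2 / p j)) / p i := by
        apply Finset.sum_le_sum
        intro i _
        exact div_le_div_of_nonneg_right (key i) (hp i).le
    _ = (∑ i, ∑ j, (A i j) ^ 2 * p j / p i) * (∑ j, x j ^ 2 / p j) := by
        rw [Finset.sum_mul]
        apply Finset.sum_congr rfl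
        intro i _
        conv_rhs => rw [← Finset.sum_div, div_mul_eq_mul_div]

lemma matNorm_bdd {n : ℕ} {p : Fin n → ℝ} (hp : ∀ i, 0 < p i)
    (A : Matrix (Fin n) (Fin n) ℝ) :
    BddAbove (Set.range fun x : {x : Fin n → ℝ // x ≠ 0} =>
      wnorm p (A.mulVec x.1) / wnorm p x.1) := by
  refine ⟨Real.sqrt (∑ i, ∑ j, (A i j) ^ 2 * p j / p i), ?_⟩
  rintro _ ⟨x, rfl⟩
  rw [div_le_iff₀ (wnorm_pos hp x.2)]
  exact wnorm_mulVec_le_frob hp A x.1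

lemma wnorm_mulVec_le {n : ℕ} {p : Fin n → ℝ} (hp : ∀ i, 0 < p i)
    (A : Matrix (Fin n) (Fin n) ℝ) (x : Fin n → ℝ) :
    wnorm p (A.mulVec x) ≤ matNorm p A * wnorm p x := by
  by_cases hx : x = 0
  · subst hx
    have h1 : wnorm p (A.mulVec 0) = 0 := by
      rw [Matrix.mulVec_zero]
      unfold wnorm; simp
    have h2 : wnorm p (0 : Fin n → ℝ) = 0 := by unfold wnorm; simp
    rw [h1, h2, mul_zero]
  · have h := le_ciSup (matNorm_bdd hp A) (⟨x, hx⟩ : {x : Fin n → ℝ // x ≠ 0})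
    rw [div_le_iff₀ (wnorm_pos hp hx)] at h
    exact h

lemma matNorm_nonneg {n : ℕ} {p : Fin n → ℝ} (hp : ∀ i, 0 < p i)
    (hn : 0 < n) (A : Matrix (Fin n) (Fin n) ℝ) : 0 ≤ matNorm p A := by
  have hx : (fun _ : Fin n => (1:ℝ)) ≠ 0 := by
    intro h
    have := congrFun h ⟨0, hn⟩
    simp at this
  have h := le_ciSup (matNorm_bdd hp A) (⟨fun _ => 1, hx⟩ : {x : Fin n → ℝ // x ≠ 0})
  exact le_trans (div_nonneg (wnorm_nonneg _ _) (wnorm_nonneg _ _)) h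

set_option maxHeartbeats 1600000 in
/-- In the gradient-push algorithm with L-Lipschitz gradients,
‖∇F(z(t))‖_{π⊗1_d} ≤ Lδ‖w(t) − nπ⊗w̄(t)‖_{π⊗1_d}
  + L(δ‖1_n − nπ‖_π σ_W^t + (Σ_j 1/π_j)^{1/2})‖w̄(t) − w_*‖
  + ‖∇F(1_n⊗w_*)‖_{π⊗1_d} + Lδ‖1_n − nπ‖_π σ_W^t ‖w_*‖. -/
theorem gradient_field_estimate {n d : ℕ}
    (W : Matrix (Fin n) (Fin n) ℝ)
    (hWnn : ∀ i j, 0 ≤ W i j) (hWcol : ∀ j, ∑ i, W i j = 1)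
    (p : Fin n → ℝ) (hppos : ∀ i, 0 < p i) (hpsum : ∑ i, p i = 1)
    (hWp : W.mulVec p = p)
    (σW : ℝ) (hσW : σW = matNorm p (W - Matrix.of fun i _ => p i))
    (f : Fin n → EuclideanSpace ℝ (Fin d) → ℝ)
    (gf : Fin n → EuclideanSpace ℝ (Fin d) → EuclideanSpace ℝ (Fin d))
    (hgrad : ∀ i x, HasGradientAt (f i) (gf i x) x)
    (α : ℝ) (hα : 0 < α)
    (w z : ℕ → Fin n → EuclideanSpace ℝ (Fin d))
    (y : ℕ → Fin n → ℝ)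
    (hy0 : y 0 = fun _ => 1) (hz0 : z 0 = w 0)
    (hyrec : ∀ t, y (t + 1) = W.mulVec (y t))
    (hwrec : ∀ t, w (t + 1) = kron W (fun i => w t i - α • gf i (z t i)))
    (hzrec : ∀ t i, z (t + 1) i = (y (t + 1) i)⁻¹ • w (t + 1) i)
    (hypos : ∀ t i, 0 < y t i)
    (δ : ℝ) (hδ : IsLUB (Set.range fun q : ℕ × Fin n => (y q.1 q.2)⁻¹) δ)
    (wbar : ℕ → EuclideanSpace ℝ (Fin d))
    (hwbar : ∀ t, wbar t = (n : ℝ)⁻¹ • ∑ i, w t i)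
    (L : ℝ) (hlip : ∀ i x x', ‖gf i x - gf i x'‖ ≤ L * ‖x - x'‖)
    (wstar : EuclideanSpace ℝ (Fin d)) (t : ℕ) :
    bnorm p (fun i => gf i (z t i))
      ≤ L * δ * bnorm p (fun i => w t i - ((n : ℝ) * p i) • wbar t)
        + L * (δ * wnorm p (fun i => 1 - (n : ℝ) * p i) * σW ^ t
            + Real.sqrt (∑ j, (p j)⁻¹)) * ‖wbar t - wstar‖
        + bnorm p (fun i => gf i wstar)
        + L * δ * wnorm p (fun i => 1 - (n : ℝ) * p i) * σW ^ t * ‖wstar‖ := by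
  have hn : 0 < n := by
    by_contra h
    push_neg at h
    interval_cases n
    simp at hpsum
  rcases Nat.eq_zero_or_pos d with hd | hd
  · subst hd
    have hz : ∀ v : EuclideanSpace ℝ (Fin 0), ‖v‖ = 0 := by
      intro v; rw [EuclideanSpace.norm_eq]; simp
    have hb : ∀ x : Fin n → EuclideanSpace ℝ (Fin 0), bnorm p x = 0 := by
      intro x; unfold bnorm; simp [hz]
    rw [hb, hb, hb, hz, hz]
    simp
  -- d ≥ 1 : gradients Lipschitz constant is nonneg
  have hL : 0 ≤ L := by
    have hv : ‖(0 : EuclideanSpace ℝ (Fin d)) - EuclideanSpace.single ⟨0, hd⟩ (1:ℝ)‖ = 1 := by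
      rw [zero_sub, norm_neg, EuclideanSpace.norm_single, norm_one]
    have h := hlip ⟨0, hn⟩ 0 (EuclideanSpace.single ⟨0, hd⟩ (1:ℝ))
    rw [hv, mul_one] at h
    exact le_trans (norm_nonneg _) h
  have hδub : ∀ s i, (y s i)⁻¹ ≤ δ := fun s i => hδ.1 ⟨(s, i), rfl⟩
  have hδnn : 0 ≤ δ :=
    le_trans (inv_nonneg.2 (hypos 0 ⟨0, hn⟩).le) (hδub 0 ⟨0, hn⟩)
  have hzall : ∀ s i, z s i = (y s i)⁻¹ • w s i := by
    intro s i
    cases s with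
    | zero => simp [hz0, hy0]
    | succ s => exact hzrec s i
  have hysum : ∀ s, ∑ i, y s i = n := by
    intro s
    induction s with
    | zero => simp [hy0]
    | succ s ih =>
        rw [hyrec]
        calc ∑ i, W.mulVec (y s) i = ∑ i, ∑ j, W i j * y s j := rfl
          _ = ∑ j, ∑ i, W i j * y s j := Finset.sum_comm
          _ = ∑ j, (∑ i, W i j) * y s j := by
              apply Finset.sum_congr rfl; intro j _; rw [Finset.sum_mul]
          _ = ∑ j, y s j := by
              apply Finset.sum_congr rfl; intro j _; rw [hWcol j, one_mul]
          _ = n := ih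
  have σnn : 0 ≤ σW := hσW ▸ matNorm_nonneg hppos hn _
  have hWpi : ∀ i, ∑ j, W i j * p j = p i := by
    intro i
    have := congrFun hWp i
    simpa [Matrix.mulVec, dotProduct] using this
  have ydecay : ∀ s, wnorm p (fun i => y s i - (n : ℝ) * p i)
      ≤ σW ^ s * wnorm p (fun i => 1 - (n : ℝ) * p i) := by
    intro s
    induction s with
    | zero => simp [hy0]
    | succ s ih =>
        have hsum0 : ∑ i, (y s i - (n : ℝ) * p i) = 0 := by
          rw [Finset.sum_sub_distrib, hysum, ← Finset.mul_sum, hpsum, mul_one, sub_self]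
        have heq : (fun i => y (s + 1) i - (n : ℝ) * p i)
            = (W - Matrix.of fun i _ => p i).mulVec (fun i => y s i - (n : ℝ) * p i) := by
          funext i
          have h1 : W.mulVec (fun i => y s i - (n : ℝ) * p i) i
              = y (s + 1) i - (n : ℝ) * p i := by
            rw [hyrec]
            show ∑ j, W i j * (y s j - (n : ℝ) * p j) = _
            calc ∑ j, W i j * (y s j - (n : ℝ) * p j)
                = ∑ j, (W i j * y s j - (n : ℝ) * (W i j * p j)) := by
                  apply Finset.sum_congr rfl; intro j _; ring
              _ = ∑ j, W i j * y s j - (n : ℝ) * ∑ j, W i j * p j := by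
                  rw [Finset.sum_sub_distrib, Finset.mul_sum]
              _ = W.mulVec (y s) i - (n : ℝ) * p i := by rw [hWpi i]; rfl
          have h2 : (Matrix.of fun i _ => p i).mulVec (fun i => y s i - (n : ℝ) * p i) i
              = 0 := by
            show ∑ j, p i * (y s j - (n : ℝ) * p j) = 0
            rw [← Finset.mul_sum, hsum0, mul_zero]
          rw [Matrix.sub_mulVec, Pi.sub_apply, h1, h2, sub_zero]
        rw [heq]
        have k1 := wnorm_mulVec_le hppos (W - Matrix.of fun i _ => p i)
          (fun i => y s i - (n : ℝ) * p i)
        rw [← hσW] at k1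
        have k2 : σW * wnorm p (fun i => y s i - (n : ℝ) * p i)
            ≤ σW * (σW ^ s * wnorm p (fun i => 1 - (n : ℝ) * p i)) :=
          mul_le_mul_of_nonneg_left ih σnn
        have k3 := k1.trans k2
        refine k3.trans (le_of_eq ?_)
        ring
  -- abbreviations (as plain terms)
  have step1 : bnorm p (fun i => gf i (z t i))
      ≤ bnorm p (fun i => gf i (z t i) - gf i wstar) + bnorm p (fun i => gf i wstar) := by
    have h := bnorm_add_le p hppos (fun i => gf i (z t i) - gf i wstar) (fun i => gf i wstar)
    have heq : (fun i => (gf i (z t i) - gf i wstar) + gf i wstar)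
        = fun i => gf i (z t i) := by funext i; abel
    rwa [heq] at h
  have step2 : bnorm p (fun i => gf i (z t i) - gf i wstar)
      ≤ L * bnorm p (fun i => z t i - wstar) :=
    bnorm_le_of hppos hL (fun j => hlip j (z t j) wstar)
  have hconst : bnorm p (fun _ : Fin n => wbar t - wstar)
      = Real.sqrt (∑ j, (p j)⁻¹) * ‖wbar t - wstar‖ := by
    unfold bnorm
    rw [← Real.sqrt_sq (norm_nonneg (wbar t - wstar)),
      ← Real.sqrt_mul (Finset.sum_nonneg fun j _ => inv_nonneg.2 (hppos j).le)]
    congr 1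
    rw [Finset.sum_mul]
    apply Finset.sum_congr rfl
    intro j _
    show ‖wbar t - wstar‖ ^ 2 / p j = (p j)⁻¹ * ‖wbar t - wstar‖ ^ 2
    ring
  have step3 : bnorm p (fun i => z t i - wstar)
      ≤ bnorm p (fun i => z t i - wbar t)
        + Real.sqrt (∑ j, (p j)⁻¹) * ‖wbar t - wstar‖ := by
    have h := bnorm_add_le p hppos (fun i => z t i - wbar t) (fun _ => wbar t - wstar)
    have heq : (fun i => (z t i - wbar t) + (wbar t - wstar))
        = fun i => z t i - wstar := by funext i; abel
    rw [heq, hconst] at h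
    exact h
  have step4 : bnorm p (fun i => z t i - wbar t)
      ≤ δ * bnorm p (fun i => w t i - ((n : ℝ) * p i) • wbar t)
        + δ * (σW ^ t * wnorm p (fun i => 1 - (n : ℝ) * p i)) * ‖wbar t‖ := by
    have hdecomp : (fun i => z t i - wbar t)
        = fun i => (y t i)⁻¹ • (w t i - ((n : ℝ) * p i) • wbar t)
            + ((y t i)⁻¹ * ((n : ℝ) * p i - y t i)) • wbar t := by
      funext i
      rw [hzall t i]
      have hy1 : (y t i)⁻¹ * y t i = 1 := inv_mul_cancel₀ (hypos t i).ne'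
      rw [smul_sub, smul_smul, mul_sub, sub_smul, hy1, one_smul]
      abel
    rw [hdecomp]
    have hA : bnorm p (fun i => (y t i)⁻¹ • (w t i - ((n : ℝ) * p i) • wbar t))
        ≤ δ * bnorm p (fun i => w t i - ((n : ℝ) * p i) • wbar t) := by
      apply bnorm_le_of hppos hδnn
      intro j
      rw [norm_smul, Real.norm_eq_abs, abs_of_pos (inv_pos.2 (hypos t j))]
      exact mul_le_mul_of_nonneg_right (hδub t j) (norm_nonneg _)
    have hB : bnorm p (fun i => ((y t i)⁻¹ * ((n : ℝ) * p i - y t i)) • wbar t)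
        ≤ δ * (σW ^ t * wnorm p (fun i => 1 - (n : ℝ) * p i)) * ‖wbar t‖ := by
      rw [bnorm_smul_const p hppos]
      apply mul_le_mul_of_nonneg_right _ (norm_nonneg _)
      calc wnorm p (fun i => (y t i)⁻¹ * ((n : ℝ) * p i - y t i))
          ≤ δ * wnorm p (fun i => y t i - (n : ℝ) * p i) := by
            apply wnorm_le_of hppos hδnn
            intro j
            rw [abs_mul, abs_of_pos (inv_pos.2 (hypos t j)), abs_sub_comm]
            exact mul_le_mul_of_nonneg_right (hδub t j) (abs_nonneg _)
        _ ≤ δ * (σW ^ t * wnorm p (fun i => 1 - (n : ℝ) * p i)) :=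
            mul_le_mul_of_nonneg_left (ydecay t) hδnn
    calc bnorm p (fun i => (y t i)⁻¹ • (w t i - ((n : ℝ) * p i) • wbar t)
            + ((y t i)⁻¹ * ((n : ℝ) * p i - y t i)) • wbar t)
        ≤ bnorm p (fun i => (y t i)⁻¹ • (w t i - ((n : ℝ) * p i) • wbar t))
          + bnorm p (fun i => ((y t i)⁻¹ * ((n : ℝ) * p i - y t i)) • wbar t) :=
          bnorm_add_le p hppos _ _
      _ ≤ _ := add_le_add hA hB
  have step5 : ‖wbar t‖ ≤ ‖wbar t - wstar‖ + ‖wstar‖ := by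
    calc ‖wbar t‖ = ‖(wbar t - wstar) + wstar‖ := by rw [sub_add_cancel]
      _ ≤ _ := norm_add_le _ _
  have hWnnn : 0 ≤ wnorm p (fun i => 1 - (n : ℝ) * p i) := wnorm_nonneg _ _
  have chain : bnorm p (fun i => gf i (z t i))
      ≤ L * ((δ * bnorm p (fun i => w t i - ((n : ℝ) * p i) • wbar t)
          + δ * (σW ^ t * wnorm p (fun i => 1 - (n : ℝ) * p i))
            * (‖wbar t - wstar‖ + ‖wstar‖))
          + Real.sqrt (∑ j, (p j)⁻¹) * ‖wbar t - wstar‖)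
        + bnorm p (fun i => gf i wstar) := by
    refine step1.trans (add_le_add_left (step2.trans ?_) _)
    apply mul_le_mul_of_nonneg_left _ hL
    refine step3.trans (add_le_add_left (step4.trans ?_) _)
    apply add_le_add_right
    apply mul_le_mul_of_nonneg_left step5
    positivity
  refine chain.trans (le_of_eq ?_)
  ring
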